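/- arXiv:1503.08375 — 2 statements merged into one kernel-verified Lean document; each statement's English description precedes it below -/
import Mathlib

section
/- Let p be an odd prime, let a, b ∈ F_p be such that X² + aX + b is irreducible over F_p, and let U be a 4-dimensional F_p-vector space with basis u₁,...,u₄. Let S² ⊆ Λ²U be the annihilator of span{f₁, f₂, f₃} where f₁ = u₁*∧u₂*, f₂ = u₁*∧u₃* + u₂*∧u₄*, f₃ = u₂*∧u₃* − b·u₁*∧u₄* − a·u₂*∧u₄*. Then S² = span{w₁, w₂, w₃} with w₁ = u₃∧u₄, w₂ = u₁∧u₃ − u₂∧u₄ − a·u₂∧u₃, w₃ = u₁∧u₄ + b·u₂∧u₃, and the span of decomposable elements of S² equals span{w₁}; hence S²_dec has codimension 2 in S². -/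
open ExteriorAlgebra

/-- The standard pairing of a `d`-tuple of dual vectors against the exterior algebra:
on the degree-`d` component it is `w ↦ ⟨⟨w, f₁ ∧ ⋯ ∧ f_d⟩⟩ = det (fᵢ(uⱼ))`, and it
vanishes on the other graded components. -/
noncomputable def pairDual (F U : Type*) [Field F] [AddCommGroup U] [Module F U]
    (d : ℕ) (f : Fin d → Module.Dual F U) : ExteriorAlgebra F U →ₗ[F] F :=
  ExteriorAlgebra.liftAlternating
    (Pi.single d (Matrix.detRowAlternating.compLinearMap (LinearMap.pi f)))

/-! Write `pₖₗ(x)` for the Plücker coordinates of `x ∈ Λ²U`, so that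
`x = ∑_{k<l} pₖₗ(x) uₖ ∧ uₗ`. The three conditions cutting out `S²` read `p₁₂ = 0`,
`p₂₄ = -p₁₃`, `p₂₃ = b p₁₄ + a p₂₄`, which solve to `x = p₃₄ w₁ + p₁₃ w₂ + p₁₄ w₃`; the
functionals `p₃₄, p₁₃, p₁₄` are dual to `w₁, w₂, w₃`, so these form a basis of `S²`.
A decomposable `x` satisfies the Plücker relation `p₁₂p₃₄ - p₁₃p₂₄ + p₁₄p₂₃ = 0`, which on
`S²` becomes `p₁₃² - a p₁₃p₁₄ + b p₁₄² = 0`. This binary quadratic form is anisotropic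
because `X² + aX + b` has no root, so `p₁₃ = p₁₄ = 0` and `x ∈ span{w₁}`. -/

theorem linearIndependent_of_biorthogonal {R M κ : Type*} [CommRing R] [AddCommGroup M]
    [Module R M] [DecidableEq κ] {v : κ → M} (φ : κ → Module.Dual R M)
    (h : ∀ i j, φ i (v j) = if i = j then 1 else 0) : LinearIndependent R v := by
  refine LinearIndependent.of_comp (LinearMap.pi φ) ?_
  have hcomp : LinearMap.pi φ ∘ v = fun j => Pi.single j 1 := by
    ext j i
    simp [h, Pi.single_apply]
  rw [hcomp]
  exact Pi.linearIndependent_single_one κ R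

open Polynomial in
theorem sq_sub_mul_mul_add_mul_sq_eq_zero_iff {K : Type*} [Field K] {a b : K}
    (hirr : Irreducible (X ^ 2 + C a * X + C b)) {β γ : K} :
    β ^ 2 - a * β * γ + b * γ ^ 2 = 0 ↔ β = 0 ∧ γ = 0 := by
  refine ⟨fun h => ?_, by rintro ⟨rfl, rfl⟩; ring⟩
  have hγ : γ = 0 := by
    by_contra hγ
    have hroot : IsRoot (X ^ 2 + C a * X + C b) (-β / γ) := by
      simp only [IsRoot, eval_add, eval_pow, eval_mul, eval_X, eval_C]
      field_simp
      linear_combination h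
    have hdeg := degree_eq_one_of_irreducible_of_root hirr hroot
    rw [show (X ^ 2 + C a * X + C b : K[X]).degree = 2 by compute_degree!] at hdeg
    exact absurd hdeg (by decide)
  subst hγ
  exact ⟨by simpa using h, rfl⟩

section

variable {F U : Type*} [Field F] [AddCommGroup U] [Module F U]

theorem ιMulti_two (v : Fin 2 → U) : ιMulti F 2 v = ι F (v 0) * ι F (v 1) := by
  simp [ιMulti_apply]
  rfl

theorem ι_mul_ι_mem_exteriorPower_two (x y : U) : ι F x * ι F y ∈ ⋀[F]^2 U := by
  rw [← ιMulti_span_fixedDegree]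
  exact Submodule.subset_span ⟨![x, y], by simp⟩

theorem pairDual_two_ι_mul_ι (f : Fin 2 → Module.Dual F U) (x y : U) :
    pairDual F U 2 f (ι F x * ι F y) = f 0 x * f 1 y - f 1 x * f 0 y := by
  rw [show ι F x * ι F y = ιMulti F 2 ![x, y] by simp, pairDual, liftAlternating_apply_ιMulti,
    Pi.single_eq_same, AlternatingMap.compLinearMap_apply]
  exact (Matrix.det_fin_two _).trans (by simp)

variable {κ : Type*}

noncomputable def pluckerCoord (u : Module.Basis κ F U) (k l : κ) :
    ExteriorAlgebra F U →ₗ[F] F :=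
  pairDual F U 2 ![u.coord k, u.coord l]

theorem pluckerCoord_ι_mul_ι (u : Module.Basis κ F U) (k l : κ) (x y : U) :
    pluckerCoord u k l (ι F x * ι F y) =
      u.repr x k * u.repr y l - u.repr x l * u.repr y k := by
  simp [pluckerCoord, pairDual_two_ι_mul_ι]

theorem pluckerCoord_basis_mul_basis [DecidableEq κ] (u : Module.Basis κ F U) (k l i j : κ) :
    pluckerCoord u k l (ι F (u i) * ι F (u j)) =
      (if (i, j) = (k, l) then 1 else 0) - (if (j, i) = (k, l) then 1 else 0) := by
  simp only [pluckerCoord_ι_mul_ι, Module.Basis.repr_self, Finsupp.single_apply, Prod.mk.injEq,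
    ite_and]
  split_ifs <;> simp_all

theorem pluckerCoord_ι_mul_ι_relation (u : Module.Basis κ F U) (i j k l : κ) (x y : U) :
    pluckerCoord u i j (ι F x * ι F y) * pluckerCoord u k l (ι F x * ι F y)
      - pluckerCoord u i k (ι F x * ι F y) * pluckerCoord u j l (ι F x * ι F y)
      + pluckerCoord u i l (ι F x * ι F y) * pluckerCoord u j k (ι F x * ι F y) = 0 := by
  simp only [pluckerCoord_ι_mul_ι]
  ring

theorem exteriorPower_two_le_span [Fintype κ] (u : Module.Basis κ F U) :
    ⋀[F]^2 U ≤ Submodule.span F (Set.range fun ij : κ × κ => ι F (u ij.1) * ι F (u ij.2)) := by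
  rw [← ιMulti_span_fixedDegree, Submodule.span_le, Set.range_subset_iff]
  intro v
  rw [ιMulti_two, ← u.sum_repr (v 0), ← u.sum_repr (v 1), map_sum, map_sum, Finset.sum_mul_sum]
  refine Submodule.sum_mem _ fun i _ => Submodule.sum_mem _ fun j _ => ?_
  rw [map_smul, map_smul, smul_mul_smul_comm]
  exact Submodule.smul_mem _ _ (Submodule.subset_span ⟨(i, j), rfl⟩)

theorem eq_sum_pluckerCoord_smul [LinearOrder κ] [Fintype κ] (u : Module.Basis κ F U)
    {x : ExteriorAlgebra F U} (hx : x ∈ ⋀[F]^2 U) :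
    x = ∑ kl ∈ Finset.univ.filter (fun kl : κ × κ => kl.1 < kl.2),
      pluckerCoord u kl.1 kl.2 x • (ι F (u kl.1) * ι F (u kl.2)) := by
  have hspan := exteriorPower_two_le_span u hx
  clear hx
  induction hspan using Submodule.span_induction with
  | mem y hy =>
    obtain ⟨⟨i, j⟩, rfl⟩ := hy
    simp only [pluckerCoord_basis_mul_basis, sub_smul, ite_smul, one_smul, zero_smul,
      Finset.sum_sub_distrib, Finset.sum_ite_eq, Finset.mem_filter, Finset.mem_univ, true_and]
    rcases lt_trichotomy i j with hij | rfl | hji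
    · simp [hij, hij.not_gt]
    · simp
    · simp [hji, hji.not_gt, eq_neg_of_add_eq_zero_left (ι_add_mul_swap (R := F) (u i) (u j))]
  | zero => simp
  | add y z _ _ hy hz =>
    conv_lhs => rw [hy, hz]
    simp only [map_add, add_smul, Finset.sum_add_distrib]
  | smul c y _ hy =>
    conv_lhs => rw [hy]
    simp only [map_smul, smul_eq_mul, mul_smul, Finset.smul_sum]

section FourDim

variable (u : Module.Basis (Fin 4) F U) (a b : F)

/-- The subspace `S²`; indices are shifted by one against the paper (`u 0` is `u₁`). -/
noncomputable def annihilatorS2 : Submodule F (ExteriorAlgebra F U) :=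
  ⋀[F]^2 U ⊓ LinearMap.ker (pluckerCoord u 0 1)
    ⊓ LinearMap.ker (pluckerCoord u 0 2 + pluckerCoord u 1 3)
    ⊓ LinearMap.ker (pluckerCoord u 1 2 - b • pluckerCoord u 0 3 - a • pluckerCoord u 1 3)

noncomputable def annihilatorS2Vec : Fin 3 → ExteriorAlgebra F U :=
  ![ι F (u 2) * ι F (u 3),
    ι F (u 0) * ι F (u 2) - ι F (u 1) * ι F (u 3) - a • (ι F (u 1) * ι F (u 2)),
    ι F (u 0) * ι F (u 3) + b • (ι F (u 1) * ι F (u 2))]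

variable {u a b}

theorem mem_annihilatorS2 {x : ExteriorAlgebra F U} :
    x ∈ annihilatorS2 u a b ↔ x ∈ ⋀[F]^2 U ∧ pluckerCoord u 0 1 x = 0 ∧
      pluckerCoord u 0 2 x + pluckerCoord u 1 3 x = 0 ∧
      pluckerCoord u 1 2 x - b * pluckerCoord u 0 3 x - a * pluckerCoord u 1 3 x = 0 := by
  simp [annihilatorS2, and_assoc]

theorem eq_sum_smul_annihilatorS2Vec {x : ExteriorAlgebra F U}
    (hx : x ∈ annihilatorS2 u a b) :
    x = pluckerCoord u 2 3 x • annihilatorS2Vec u a b 0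
      + pluckerCoord u 0 2 x • annihilatorS2Vec u a b 1
      + pluckerCoord u 0 3 x • annihilatorS2Vec u a b 2 := by
  obtain ⟨hx2, h01, h02, h12⟩ := mem_annihilatorS2.mp hx
  conv_lhs => rw [eq_sum_pluckerCoord_smul u hx2]
  simp only [Finset.sum_filter, Fintype.sum_prod_type, Fin.sum_univ_four, Fin.isValue,
    not_lt_zero, ↓reduceIte, Fin.lt_one_iff, Nat.reduceAdd, zero_add, Fin.reduceLT, one_ne_zero,
    Fin.reduceEq, lt_self_iff_false, add_zero, annihilatorS2Vec, Matrix.cons_val_zero,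
    Matrix.cons_val_one, Matrix.cons_val, smul_add]
  linear_combination (norm := module) h01 • (ι F (u 0) * ι F (u 1))
    + h12 • (ι F (u 1) * ι F (u 2)) + h02 • (a • (ι F (u 1) * ι F (u 2)) + ι F (u 1) * ι F (u 3))

theorem annihilatorS2Vec_mem (i : Fin 3) : annihilatorS2Vec u a b i ∈ annihilatorS2 u a b := by
  have he (i j : Fin 4) := ι_mul_ι_mem_exteriorPower_two (F := F) (u i) (u j)
  rw [mem_annihilatorS2]
  fin_cases i <;>
    simp [annihilatorS2Vec, pluckerCoord_ι_mul_ι, he, Submodule.sub_mem, Submodule.add_mem,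
      Submodule.smul_mem]

theorem annihilatorS2_eq_span_range :
    annihilatorS2 u a b = Submodule.span F (Set.range (annihilatorS2Vec u a b)) := by
  refine le_antisymm (fun x hx => ?_)
    (Submodule.span_le.mpr (Set.range_subset_iff.mpr annihilatorS2Vec_mem))
  have hw (i : Fin 3) : annihilatorS2Vec u a b i ∈
      Submodule.span F (Set.range (annihilatorS2Vec u a b)) :=
    Submodule.subset_span ⟨i, rfl⟩
  rw [eq_sum_smul_annihilatorS2Vec hx]
  exact add_mem (add_mem (Submodule.smul_mem _ _ (hw 0)) (Submodule.smul_mem _ _ (hw 1)))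
    (Submodule.smul_mem _ _ (hw 2))

theorem linearIndependent_annihilatorS2Vec : LinearIndependent F (annihilatorS2Vec u a b) := by
  refine linearIndependent_of_biorthogonal
    ![pluckerCoord u 2 3, pluckerCoord u 0 2, pluckerCoord u 0 3] fun i j => ?_
  fin_cases i <;> fin_cases j <;> simp [annihilatorS2Vec, pluckerCoord_ι_mul_ι]

theorem pluckerCoord_eq_zero_of_ι_mul_ι_mem_annihilatorS2
    (hirr : Irreducible (Polynomial.X ^ 2 + Polynomial.C a * Polynomial.X + Polynomial.C b))
    {x y : U} (hxy : ι F x * ι F y ∈ annihilatorS2 u a b) :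
    pluckerCoord u 0 2 (ι F x * ι F y) = 0 ∧ pluckerCoord u 0 3 (ι F x * ι F y) = 0 := by
  obtain ⟨-, h01, h02, h12⟩ := mem_annihilatorS2.mp hxy
  refine (sq_sub_mul_mul_add_mul_sq_eq_zero_iff hirr).mp ?_
  linear_combination pluckerCoord_ι_mul_ι_relation u 0 1 2 3 x y
    - pluckerCoord u 2 3 (ι F x * ι F y) * h01
    + (pluckerCoord u 0 2 (ι F x * ι F y) - a * pluckerCoord u 0 3 (ι F x * ι F y)) * h02
    - pluckerCoord u 0 3 (ι F x * ι F y) * h12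

theorem span_decomposable_annihilatorS2
    (hirr : Irreducible (Polynomial.X ^ 2 + Polynomial.C a * Polynomial.X + Polynomial.C b)) :
    Submodule.span F {x | x ∈ annihilatorS2 u a b ∧ ∃ x' y' : U, x = ι F x' * ι F y'} =
      Submodule.span F {annihilatorS2Vec u a b 0} := by
  refine le_antisymm (Submodule.span_le.mpr ?_) (Submodule.span_mono ?_)
  · rintro _ ⟨hx, x, y, rfl⟩
    obtain ⟨h02, h03⟩ := pluckerCoord_eq_zero_of_ι_mul_ι_mem_annihilatorS2 hirr hx
    rw [eq_sum_smul_annihilatorS2Vec hx, h02, h03]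
    simpa using Submodule.smul_mem _ _ (Submodule.mem_span_singleton_self _)
  · rintro _ rfl
    exact ⟨annihilatorS2Vec_mem 0, u 2, u 3, rfl⟩

end FourDim

end

theorem stmt_16_general (p : ℕ) [Fact p.Prime] (a b : ZMod p)
    (hirr : Irreducible (Polynomial.X ^ 2 + Polynomial.C a * Polynomial.X
      + Polynomial.C b : Polynomial (ZMod p)))
    (U : Type*) [AddCommGroup U] [Module (ZMod p) U] (u : Module.Basis (Fin 4) (ZMod p) U) :
    let F := ZMod p
    let φ₁ := pairDual F U 2 ![u.coord 0, u.coord 1]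
    let φ₂ := pairDual F U 2 ![u.coord 0, u.coord 2] + pairDual F U 2 ![u.coord 1, u.coord 3]
    let φ₃ := pairDual F U 2 ![u.coord 1, u.coord 2] - b • pairDual F U 2 ![u.coord 0, u.coord 3]
      - a • pairDual F U 2 ![u.coord 1, u.coord 3]
    let S₂ : Submodule F (ExteriorAlgebra F U) :=
      ⋀[F]^2 U ⊓ LinearMap.ker φ₁ ⊓ LinearMap.ker φ₂ ⊓ LinearMap.ker φ₃
    let e : Fin 4 → ExteriorAlgebra F U := fun i => ι F (u i)
    let w₁ := e 2 * e 3
    let w₂ := e 0 * e 2 - e 1 * e 3 - a • (e 1 * e 2)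
    let w₃ := e 0 * e 3 + b • (e 1 * e 2)
    let S₂dec : Submodule F (ExteriorAlgebra F U) :=
      Submodule.span F {x | x ∈ S₂ ∧ ∃ x' y' : U, x = ι F x' * ι F y'}
    S₂ = Submodule.span F {w₁, w₂, w₃} ∧ S₂dec = Submodule.span F {w₁} ∧
      Module.finrank F S₂ = Module.finrank F S₂dec + 2 := by
  intro F φ₁ φ₂ φ₃ S₂ e w₁ w₂ w₃ S₂dec
  have hrange : Set.range (annihilatorS2Vec u a b) = {w₁, w₂, w₃} := by
    rw [annihilatorS2Vec, Matrix.range_cons, Matrix.range_cons_cons_empty, Set.singleton_union]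
  have hS₂ : S₂ = Submodule.span F (Set.range (annihilatorS2Vec u a b)) :=
    annihilatorS2_eq_span_range
  have hS₂dec : S₂dec = Submodule.span F {w₁} := span_decomposable_annihilatorS2 hirr
  have hw₁ : w₁ ≠ 0 := (linearIndependent_annihilatorS2Vec (u := u) (a := a) (b := b)).ne_zero 0
  refine ⟨hrange ▸ hS₂, hS₂dec, ?_⟩
  rw [hS₂, hS₂dec, finrank_span_eq_card linearIndependent_annihilatorS2Vec,
    finrank_span_singleton hw₁, Fintype.card_fin]

/-- Let `p` be odd, `a, b ∈ F_p` with `X² + aX + b` irreducible, `U` a 4-dimensional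
`F_p`-vector space, and `S² ⊆ Λ²U` the annihilator of `span{f₁, f₂, f₃}` where
`f₁ = u₁*∧u₂*`, `f₂ = u₁*∧u₃* + u₂*∧u₄*`, `f₃ = u₂*∧u₃* − b·u₁*∧u₄* − a·u₂*∧u₄*`.
Then `S² = span{w₁, w₂, w₃}` with `w₁ = u₃∧u₄`, `w₂ = u₁∧u₃ − u₂∧u₄ − a·u₂∧u₃`,
`w₃ = u₁∧u₄ + b·u₂∧u₃`, the span of the decomposable elements of `S²` equals
`span{w₁}`, and `S²_dec` has codimension 2 in `S²`. -/
theorem stmt_16 (p : ℕ) [Fact p.Prime] (hp2 : p ≠ 2) (a b : ZMod p)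
    (hirr : Irreducible (Polynomial.X ^ 2 + Polynomial.C a * Polynomial.X
      + Polynomial.C b : Polynomial (ZMod p)))
    (U : Type*) [AddCommGroup U] [Module (ZMod p) U] (u : Module.Basis (Fin 4) (ZMod p) U) :
    let F := ZMod p
    let φ₁ := pairDual F U 2 ![u.coord 0, u.coord 1]
    let φ₂ := pairDual F U 2 ![u.coord 0, u.coord 2] + pairDual F U 2 ![u.coord 1, u.coord 3]
    let φ₃ := pairDual F U 2 ![u.coord 1, u.coord 2] - b • pairDual F U 2 ![u.coord 0, u.coord 3]
      - a • pairDual F U 2 ![u.coord 1, u.coord 3]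
    let S₂ : Submodule F (ExteriorAlgebra F U) :=
      ⋀[F]^2 U ⊓ LinearMap.ker φ₁ ⊓ LinearMap.ker φ₂ ⊓ LinearMap.ker φ₃
    let e : Fin 4 → ExteriorAlgebra F U := fun i => ι F (u i)
    let w₁ := e 2 * e 3
    let w₂ := e 0 * e 2 - e 1 * e 3 - a • (e 1 * e 2)
    let w₃ := e 0 * e 3 + b • (e 1 * e 2)
    let S₂dec : Submodule F (ExteriorAlgebra F U) :=
      Submodule.span F {x | x ∈ S₂ ∧ ∃ x' y' : U, x = ι F x' * ι F y'}
    S₂ = Submodule.span F {w₁, w₂, w₃} ∧ S₂dec = Submodule.span F {w₁} ∧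
      Module.finrank F S₂ = Module.finrank F S₂dec + 2 :=
  stmt_16_general p a b hirr U u
end

section
/- Let U be a 4-dimensional F_p-vector space (p an odd prime) with basis u₁,...,u₄, and set f₁ = u₁*∧u₂*, f₂ = u₁*∧u₃* + u₂*∧u₄*, f₃ = u₁*∧u₄* in Λ²U*. Then span{fᵢ ∧ uⱼ* : 1 ≤ i ≤ 3, 1 ≤ j ≤ 4} = Λ³U*; equivalently, the annihilator S³ ⊆ Λ³U of this span is zero. -/
/-!
The products `eₐ ∧ e_b ∧ e_c`, `a < b < c`, of a basis `e₁, …, e₄` form a basis of `Λ³`, and up to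
sign each of them is some `fᵢ ∧ eⱼ`: `f₁ ∧ e₃`, `f₁ ∧ e₄`, `f₂ ∧ e₄ = e₁ ∧ e₃ ∧ e₄` and
`f₂ ∧ e₃ = -e₂ ∧ e₃ ∧ e₄`. Dually, the pairings of `x ∈ Λ³U` with the `fᵢ ∧ uⱼ*` include all four
coordinates of `x`, so they vanish only at `x = 0`.
-/

open ExteriorAlgebra

section PairDual

variable {F M : Type*} [Field F] [AddCommGroup M] [Module F M] {n : ℕ}

theorem pairDual_ιMulti (f : Fin n → Module.Dual F M) (v : Fin n → M) :
    pairDual F M n f (ιMulti F n v) = (Matrix.of fun i j => f j (v i)).det := by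
  rw [pairDual, liftAlternating_apply_ιMulti, Pi.single_eq_same,
    AlternatingMap.compLinearMap_apply]
  rfl

theorem pairDual_apply_coe (f : Fin n → Module.Dual F M) (y : ⋀[F]^n M) :
    pairDual F M n f y = exteriorPower.pairingDual F M n (exteriorPower.ιMulti F n f) y := by
  have h : (pairDual F M n f).comp (⋀[F]^n M).subtype =
      exteriorPower.pairingDual F M n (exteriorPower.ιMulti F n f) :=
    LinearMap.ext_on_range (exteriorPower.ιMulti_span F n M) fun v => by
      simp [pairDual_ιMulti]
  exact LinearMap.congr_fun h y

theorem pairDual_comp_perm_apply (f : Fin n → Module.Dual F M) (σ : Equiv.Perm (Fin n))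
    {x : ExteriorAlgebra F M} (hx : x ∈ ⋀[F]^n M) :
    pairDual F M n (f ∘ σ) x = Equiv.Perm.sign σ • pairDual F M n f x := by
  rw [← Subtype.coe_mk x hx, pairDual_apply_coe, pairDual_apply_coe,
    AlternatingMap.map_perm, map_zsmul_unit, LinearMap.smul_apply]

theorem pairDual_apply_eq_zero_of_eq (f : Fin n → Module.Dual F M) {i j : Fin n}
    (hf : f i = f j) (hij : i ≠ j) {x : ExteriorAlgebra F M} (hx : x ∈ ⋀[F]^n M) :
    pairDual F M n f x = 0 := by
  rw [← Subtype.coe_mk x hx, pairDual_apply_coe, AlternatingMap.map_eq_zero_of_eq _ f hf hij,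
    map_zero, LinearMap.zero_apply]

theorem eq_zero_of_forall_pairDual_coord_eq_zero {I : Type*} [LinearOrder I]
    (b : Module.Basis I F M) {x : ExteriorAlgebra F M} (hx : x ∈ ⋀[F]^n M)
    (h : ∀ v : Fin n ↪o I, pairDual F M n (b.coord ∘ v) x = 0) : x = 0 := by
  suffices (⟨x, hx⟩ : ⋀[F]^n M) = 0 from congrArg Subtype.val this
  refine (b.exteriorPower n).ext_elem fun s => ?_
  rw [exteriorPower.basis_repr_apply, map_zero, Finsupp.zero_apply, exteriorPower.ιMultiDual,
    ← h (Set.powersetCard.ofFinEmbEquiv.symm s)]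
  exact (pairDual_apply_coe _ ⟨x, hx⟩).symm

end PairDual

theorem Fin.orderEmbedding_three_four (v : Fin 3 ↪o Fin 4) :
    ⇑v = ![0, 1, 2] ∨ ⇑v = ![0, 1, 3] ∨ ⇑v = ![0, 2, 3] ∨ ⇑v = ![1, 2, 3] := by
  have henum : ∀ w : Fin 3 → Fin 4, (∀ a b, a < b → w a < w b) →
      w = ![0, 1, 2] ∨ w = ![0, 1, 3] ∨ w = ![0, 2, 3] ∨ w = ![1, 2, 3] := by
    decide
  exact henum v fun _ _ h => v.strictMono h

section TwoForms

variable {R M : Type*} [CommRing R] [AddCommGroup M] [Module R M]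

theorem ι_mul_ι_mul_ι_mem_exteriorPower (a b c : M) : ι R a * ι R b * ι R c ∈ ⋀[R]^3 M := by
  show _ ∈ LinearMap.range (ι R) ^ 3
  rw [pow_three']
  exact Submodule.mul_mem_mul (Submodule.mul_mem_mul ⟨a, rfl⟩ ⟨b, rfl⟩) ⟨c, rfl⟩

theorem ιMulti_fin_three (v : Fin 3 → M) :
    ιMulti R 3 v = ι R (v 0) * ι R (v 1) * ι R (v 2) := by
  simp [ιMulti_apply, mul_assoc, Matrix.vecTail]

def twoForms (e : Fin 4 → M) : Fin 3 → ExteriorAlgebra R M :=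
  ![ι R (e 0) * ι R (e 1), ι R (e 0) * ι R (e 2) + ι R (e 1) * ι R (e 3), ι R (e 0) * ι R (e 3)]

theorem span_twoForms_mul_ι_eq_exteriorPower_three {e : Fin 4 → M}
    (he : Submodule.span R (Set.range e) = ⊤) :
    Submodule.span R {x | ∃ i : Fin 3, ∃ j : Fin 4, x = twoForms (R := R) e i * ι R (e j)} =
      ⋀[R]^3 M := by
  set P := Submodule.span R {x | ∃ i : Fin 3, ∃ j : Fin 4, x = twoForms (R := R) e i * ι R (e j)}
  apply le_antisymm
  · rw [Submodule.span_le]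
    rintro _ ⟨i, j, rfl⟩
    fin_cases i <;> simp [twoForms, add_mul, ι_mul_ι_mul_ι_mem_exteriorPower, add_mem]
  · have mem (i : Fin 3) (j : Fin 4) : twoForms e i * ι R (e j) ∈ P :=
      Submodule.subset_span ⟨i, j, rfl⟩
    have h023 : ι R (e 0) * ι R (e 2) * ι R (e 3) = twoForms e 1 * ι R (e 3) := by
      simp [twoForms, add_mul, mul_assoc]
    have h123 : ι R (e 1) * ι R (e 2) * ι R (e 3) = -(twoForms e 1 * ι R (e 2)) := by
      have hswap : ι R (e 3) * ι R (e 2) = -(ι R (e 2) * ι R (e 3)) :=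
        eq_neg_of_add_eq_zero_left (ι_add_mul_swap _ _)
      simp [twoForms, add_mul, mul_assoc, hswap]
    rw [← exteriorPower.ιMulti_family_span_fixedDegree_of_span R he, Submodule.span_le]
    rintro _ ⟨s, rfl⟩
    obtain h | h | h | h :=
        Fin.orderEmbedding_three_four (Set.powersetCard.ofFinEmbEquiv.symm s) <;>
      simp only [SetLike.mem_coe, ExteriorAlgebra.ιMulti_family, ιMulti_fin_three,
        Function.comp_apply, h, Matrix.cons_val_zero, Matrix.cons_val_one, Matrix.cons_val_two]
    · exact mem 0 2
    · exact mem 0 3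
    · exact h023 ▸ mem 1 3
    · exact h123 ▸ P.neg_mem (mem 1 2)

end TwoForms

section TwoFormPairing

variable {F M : Type*} [Field F] [AddCommGroup M] [Module F M]

/-- `twoFormPairing c i j` is the pairing with `twoForms c i * ι F (c j)`, expanded by
bilinearity into `pairDual` of triples. -/
noncomputable def twoFormPairing (c : Fin 4 → Module.Dual F M) :
    Fin 3 → Fin 4 → (ExteriorAlgebra F M →ₗ[F] F) := fun i j =>
    ![pairDual F M 3 ![c 0, c 1, c j],
      pairDual F M 3 ![c 0, c 2, c j] + pairDual F M 3 ![c 1, c 3, c j],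
      pairDual F M 3 ![c 0, c 3, c j]] i

theorem eq_zero_of_twoFormPairing_eq_zero (u : Module.Basis (Fin 4) F M)
    {x : ExteriorAlgebra F M} (hx : x ∈ ⋀[F]^3 M)
    (h : ∀ i j, twoFormPairing u.coord i j x = 0) : x = 0 := by
  set c := u.coord
  have h012 : pairDual F M 3 ![c 0, c 1, c 2] x = 0 := h 0 2
  have h013 : pairDual F M 3 ![c 0, c 1, c 3] x = 0 := h 0 3
  have h023 : pairDual F M 3 ![c 0, c 2, c 3] x = 0 := by
    simpa [twoFormPairing, pairDual_apply_eq_zero_of_eq ![c 1, c 3, c 3]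
      (i := 1) (j := 2) rfl (by decide) hx] using h 1 3
  have h123 : pairDual F M 3 ![c 1, c 2, c 3] x = 0 := by
    have h132 : pairDual F M 3 ![c 1, c 3, c 2] x = 0 := by
      simpa [twoFormPairing, pairDual_apply_eq_zero_of_eq ![c 0, c 2, c 2]
        (i := 1) (j := 2) rfl (by decide) hx] using h 1 2
    have hswap : ![c 1, c 3, c 2] = ![c 1, c 2, c 3] ∘ Equiv.swap 1 2 := by
      funext i; fin_cases i <;> rfl
    rw [hswap, pairDual_comp_perm_apply _ _ hx, Equiv.Perm.sign_swap (by decide)] at h132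
    simpa using h132
  refine eq_zero_of_forall_pairDual_coord_eq_zero u hx fun v => ?_
  obtain h | h | h | h := Fin.orderEmbedding_three_four v <;>
    rw [h, ← FinVec.map_eq] <;> assumption

end TwoFormPairing

theorem stmt_17_general (p : ℕ) [Fact p.Prime]
    (U : Type*) [AddCommGroup U] [Module (ZMod p) U] (u : Module.Basis (Fin 4) (ZMod p) U) :
    let F := ZMod p
    let ι' : Module.Dual F U → ExteriorAlgebra F (Module.Dual F U) := ι F
    let f : Fin 3 → ExteriorAlgebra F (Module.Dual F U) :=
      ![ι' (u.coord 0) * ι' (u.coord 1),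
        ι' (u.coord 0) * ι' (u.coord 2) + ι' (u.coord 1) * ι' (u.coord 3),
        ι' (u.coord 0) * ι' (u.coord 3)]
    let φ : Fin 3 → Fin 4 → (ExteriorAlgebra F U →ₗ[F] F) := fun i j =>
      ![pairDual F U 3 ![u.coord 0, u.coord 1, u.coord j],
        pairDual F U 3 ![u.coord 0, u.coord 2, u.coord j]
          + pairDual F U 3 ![u.coord 1, u.coord 3, u.coord j],
        pairDual F U 3 ![u.coord 0, u.coord 3, u.coord j]] i
    Submodule.span F {x | ∃ i : Fin 3, ∃ j : Fin 4, x = f i * ι' (u.coord j)} =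
        ⋀[F]^3 (Module.Dual F U) ∧
      ⋀[F]^3 U ⊓ (⨅ i : Fin 3, ⨅ j : Fin 4, LinearMap.ker (φ i j)) = ⊥ := by
  intro F ι' f φ
  have hspan : Submodule.span F (Set.range u.coord) = ⊤ := by
    rw [← u.coe_dualBasis]
    exact u.dualBasis.span_eq
  refine ⟨span_twoForms_mul_ι_eq_exteriorPower_three hspan, ?_⟩
  rw [eq_bot_iff]
  rintro x ⟨hx, hφ⟩
  simp only [SetLike.mem_coe, Submodule.mem_iInf, LinearMap.mem_ker] at hφ
  exact (Submodule.mem_bot F).2 (eq_zero_of_twoFormPairing_eq_zero u hx hφ)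

/-- Let `U` be a 4-dimensional `F_p`-vector space (`p` odd) and set `f₁ = u₁*∧u₂*`,
`f₂ = u₁*∧u₃* + u₂*∧u₄*`, `f₃ = u₁*∧u₄*` in `Λ²U*`.  Then
`span{fᵢ ∧ uⱼ* : 1 ≤ i ≤ 3, 1 ≤ j ≤ 4} = Λ³U*`; equivalently, the annihilator
`S³ ⊆ Λ³U` of this span is zero. -/
theorem stmt_17 (p : ℕ) [Fact p.Prime] (hp2 : p ≠ 2)
    (U : Type*) [AddCommGroup U] [Module (ZMod p) U] (u : Module.Basis (Fin 4) (ZMod p) U) :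
    let F := ZMod p
    let ι' : Module.Dual F U → ExteriorAlgebra F (Module.Dual F U) := ι F
    let f : Fin 3 → ExteriorAlgebra F (Module.Dual F U) :=
      ![ι' (u.coord 0) * ι' (u.coord 1),
        ι' (u.coord 0) * ι' (u.coord 2) + ι' (u.coord 1) * ι' (u.coord 3),
        ι' (u.coord 0) * ι' (u.coord 3)]
    let φ : Fin 3 → Fin 4 → (ExteriorAlgebra F U →ₗ[F] F) := fun i j =>
      ![pairDual F U 3 ![u.coord 0, u.coord 1, u.coord j],
        pairDual F U 3 ![u.coord 0, u.coord 2, u.coord j]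
          + pairDual F U 3 ![u.coord 1, u.coord 3, u.coord j],
        pairDual F U 3 ![u.coord 0, u.coord 3, u.coord j]] i
    Submodule.span F {x | ∃ i : Fin 3, ∃ j : Fin 4, x = f i * ι' (u.coord j)} =
        ⋀[F]^3 (Module.Dual F U) ∧
      ⋀[F]^3 U ⊓ (⨅ i : Fin 3, ⨅ j : Fin 4, LinearMap.ker (φ i j)) = ⊥ :=
  stmt_17_general p U u
end
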